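/- Let 𝒫 be a finite partition of S¹ with |𝒫| ≥ 2 into path-connected parts such that the auxiliary quiver Q — with vertex set 𝒫 and an arrow P → P' whenever P ≠ P', P ∪ P' is path-connected, and there exist x ∈ P, y ∈ P' with y ⪯ x — is a quiver of type Ã_{|𝒫|−1}. If M is an indecomposable finite-dimensional representation of Q, then its push down — the representation U of Ã_ℝ with U(x) = M(P) for x ∈ P, equal to the identity on generating morphisms within a part and to the composite of the maps of M along the corresponding arrows of Q otherwise — is an indecomposable representation of Ã_ℝ. -/

import Mathlib

open Set

noncomputable section

/-- A continuous quiver of type Ã: the data of the (even) set `S` of sinks/sources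
on the circle, described via the cardinality `2*m`-ish data `m` and the angles `α`.
When `m = 0` we are in the cyclic case and fix `α j = π j`. -/
structure AtR where
  m : ℕ
  α : ℤ → ℝ
  mono : StrictMono α
  cyc : m = 0 → ∀ j : ℤ, α j = Real.pi * j
  per : m ≠ 0 → ∀ j : ℤ, α (j + 2 * m) = α j + 2 * Real.pi
  base0 : 0 ≤ α 0
  base1 : α 0 < 2 * Real.pi

namespace AtR

variable (Q : AtR)

/-- `covRel θ φ` holds iff there is a morphism `e^{iθ} → e^{iφ}` in the continuous
quiver of type Ã, presented on the universal cover `ℝ` of the circle.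
In the cyclic case (`m = 0`) morphisms go counterclockwise, i.e. `θ ≤ φ`;
otherwise a morphism stays within one (lifted) arc `[α j, α (j+1)]` and goes
down on even arcs (towards the sink `α j`) and up on odd arcs. -/
def covRel (θ φ : ℝ) : Prop :=
  if Q.m = 0 then θ ≤ φ
  else ∃ j : ℤ, θ ∈ Set.Icc (Q.α j) (Q.α (j + 1)) ∧ φ ∈ Set.Icc (Q.α j) (Q.α (j + 1)) ∧
    ((Even j ∧ φ ≤ θ) ∨ (¬ Even j ∧ θ ≤ φ))

variable {Q}

lemma arcs_overlap {j j' : ℤ} {x : ℝ}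
    (hj : x ∈ Set.Icc (Q.α j) (Q.α (j + 1))) (hj' : x ∈ Set.Icc (Q.α j') (Q.α (j' + 1)))
    (hne : j ≠ j') :
    (j' = j + 1 ∧ x = Q.α (j + 1)) ∨ (j = j' + 1 ∧ x = Q.α j) := by
  rcases lt_or_gt_of_ne hne with h | h
  · left
    have h1 : j + 1 ≤ j' := by omega
    have h2 : Q.α (j + 1) ≤ Q.α j' := Q.mono.monotone h1
    have hx : x = Q.α (j + 1) := le_antisymm hj.2 (le_trans h2 hj'.1)
    have hx2 : Q.α (j + 1) = Q.α j' := le_antisymm h2 (hx ▸ hj'.1)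
    exact ⟨(Q.mono.injective hx2).symm, hx⟩
  · right
    have h1 : j' + 1 ≤ j := by omega
    have h2 : Q.α (j' + 1) ≤ Q.α j := Q.mono.monotone h1
    have hx : x = Q.α (j' + 1) := le_antisymm hj'.2 (le_trans h2 hj.1)
    have hx2 : Q.α (j' + 1) = Q.α j := le_antisymm h2 (hx ▸ hj.1)
    exact ⟨Q.mono.injective hx2.symm, hx.trans hx2⟩

/-- Key lemma: if there are morphisms `θ → φ` and `φ → ψ` then `φ` lies in the
convex hull of `{θ, ψ}`. -/
lemma covRel_hull {θ φ ψ : ℝ} (h1 : Q.covRel θ φ) (h2 : Q.covRel φ ψ) :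
    min θ ψ ≤ φ ∧ φ ≤ max θ ψ := by
  unfold covRel at h1 h2
  by_cases hm : Q.m = 0
  · rw [if_pos hm] at h1 h2
    exact ⟨le_trans (min_le_left _ _) h1, le_trans h2 (le_max_right _ _)⟩
  · rw [if_neg hm] at h1 h2
    obtain ⟨j, hθ, hφ, hp⟩ := h1
    obtain ⟨j2, hφ2, hψ, hp2⟩ := h2
    by_cases hjj : j = j2
    · subst hjj
      rcases hp with ⟨he, hle⟩ | ⟨ho, hle⟩ <;> rcases hp2 with ⟨he2, hle2⟩ | ⟨ho2, hle2⟩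
      · exact ⟨le_trans (min_le_right _ _) hle2, le_trans hle (le_max_left _ _)⟩
      · exact absurd he ho2
      · exact absurd he2 ho
      · exact ⟨le_trans (min_le_left _ _) hle, le_trans hle2 (le_max_right _ _)⟩
    · rcases arcs_overlap hφ hφ2 hjj with ⟨hj2, hφe⟩ | ⟨hj2, hφe⟩
      · -- j2 = j + 1, φ = α (j+1)
        rcases hp with ⟨he, hle⟩ | ⟨ho, hle⟩
        · -- Even j, φ ≤ θ and θ ≤ α (j+1) = φ so θ = φ
          have hθφ : θ = φ := le_antisymm (hφe ▸ hθ.2) hle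
          rw [← hθφ]
          exact ⟨min_le_left _ _, le_max_left _ _⟩
        · -- Odd j so j2 = j+1 is even
          have he2 : Even j2 := by
            rw [hj2]; rcases Int.even_or_odd j with h | h
            · exact absurd h ho
            · exact h.add_one
          rcases hp2 with ⟨_, hle2⟩ | ⟨ho2, _⟩
          · -- ψ ≤ φ, but φ = α j2 is the bottom of the arc of j2, so ψ = φ
            have hψφ : ψ = φ := by
              have : Q.α j2 ≤ ψ := hψ.1
              have hb : φ = Q.α j2 := by rw [hj2]; exact hφe
              linarith [hb ▸ this]
            rw [← hψφ]
            exact ⟨min_le_right _ _, le_max_right _ _⟩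
          · exact absurd he2 ho2
      · -- j = j2 + 1, φ = α j
        rcases hp2 with ⟨he2, hle2⟩ | ⟨ho2, hle2⟩
        · -- Even j2, ψ ≤ φ; φ = α j = α (j2+1) is the top of arc j2... and j odd
          have ho : ¬ Even j := by
            rw [hj2]; intro h
            exact (Int.even_add_one.mp h) he2
          rcases hp with ⟨he', _⟩ | ⟨_, hle⟩
          · exact absurd he' ho
          · -- θ ≤ φ, φ = α j is bottom of arc j, so θ = φ
            have hθφ : θ = φ := le_antisymm hle (hφe ▸ hθ.1)
            rw [← hθφ]
            exact ⟨min_le_left _ _, le_max_left _ _⟩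
        · -- Odd j2, φ ≤ ψ; φ = α (j2+1) top of arc j2 so ψ = φ
          have hψφ : ψ = φ := by
            have hup : ψ ≤ Q.α (j2 + 1) := hψ.2
            have hb : φ = Q.α (j2 + 1) := by rw [← hj2]; exact hφe
            linarith [hb ▸ hup]
          rw [← hψφ]
          exact ⟨min_le_right _ _, le_max_right _ _⟩

lemma covRel_up (j : ℤ) (h : Q.m = 0 ∨ ¬ Even j) : Q.covRel (Q.α j) (Q.α (j + 1)) := by
  unfold covRel
  split_ifs with hm
  · exact Q.mono.monotone (by omega)
  · rcases h with h0 | hodd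
    · exact absurd h0 hm
    · exact ⟨j, ⟨le_rfl, Q.mono.monotone (by omega)⟩,
        ⟨Q.mono.monotone (by omega), le_rfl⟩,
        Or.inr ⟨hodd, Q.mono.monotone (by omega)⟩⟩

lemma covRel_down (j : ℤ) (hm : Q.m ≠ 0) (he : Even j) :
    Q.covRel (Q.α (j + 1)) (Q.α j) := by
  unfold covRel
  rw [if_neg hm]
  exact ⟨j, ⟨Q.mono.monotone (by omega), le_rfl⟩, ⟨le_rfl, Q.mono.monotone (by omega)⟩,
    Or.inl ⟨he, Q.mono.monotone (by omega)⟩⟩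

variable (Q)

/-- The number of arcs used to travel once around the circle. -/
def periodN : ℕ := if Q.m = 0 then 2 else 2 * Q.m

lemma periodN_pos : 0 < Q.periodN := by
  unfold periodN; split_ifs <;> omega

lemma α_periodN : Q.α (Q.periodN : ℤ) = Q.α 0 + 2 * Real.pi := by
  unfold periodN
  split_ifs with hm
  · have h2 : ((2:ℕ):ℤ) = 2 := by norm_cast
    rw [h2, Q.cyc hm 2, Q.cyc hm 0]
    push_cast; ring
  · have := Q.per hm 0
    rw [zero_add] at this
    rw [← this]
    norm_cast

end AtR
/-- A representation (i.e. an `S¹` persistence module) of the continuous quiver of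
type Ã, presented equivariantly on the universal cover: vector spaces `obj θ`,
linear maps along every morphism of the quiver (encoded by `covRel`), and a
periodicity isomorphism `per` identifying `obj (θ + 2π)` with `obj θ`,
compatibly with the maps. -/
structure SRep (k : Type) [Field k] (Q : AtR) where
  obj : ℝ → Type
  [instAdd : ∀ θ, AddCommGroup (obj θ)]
  [instMod : ∀ θ, Module k (obj θ)]
  map : ∀ {θ φ : ℝ}, Q.covRel θ φ → (obj θ →ₗ[k] obj φ)
  map_id : ∀ (θ : ℝ) (h : Q.covRel θ θ), map h = LinearMap.id
  map_comp : ∀ {θ φ ψ : ℝ} (h1 : Q.covRel θ φ) (h2 : Q.covRel φ ψ) (h3 : Q.covRel θ ψ),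
      map h3 = (map h2).comp (map h1)
  per : ∀ θ : ℝ, obj (θ + 2 * Real.pi) ≃ₗ[k] obj θ
  per_map : ∀ {θ φ : ℝ} (h : Q.covRel θ φ) (h' : Q.covRel (θ + 2 * Real.pi) (φ + 2 * Real.pi)),
      (map h).comp (per θ).toLinearMap = ((per φ).toLinearMap).comp (map h')

attribute [instance] SRep.instAdd SRep.instMod

namespace SRep

variable {k : Type} [Field k] {Q : AtR}

lemma per_map_apply (V : SRep k Q) {θ φ : ℝ} (h : Q.covRel θ φ)
    (h' : Q.covRel (θ + 2 * Real.pi) (φ + 2 * Real.pi)) (x : V.obj (θ + 2 * Real.pi)) :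
    V.map h (V.per θ x) = V.per φ (V.map h' x) :=
  LinearMap.congr_fun (V.per_map h h') x

/-- Transport along an equality of points of the cover. -/
def castO (V : SRep k Q) {a b : ℝ} (h : a = b) : V.obj a ≃ₗ[k] V.obj b :=
  h ▸ LinearEquiv.refl k (V.obj a)

/-- A family of linear maps is a morphism of representations if it is natural with
respect to all the structure maps and the periodicity isomorphisms. -/
def IsHomFam (V W : SRep k Q) (f : ∀ θ, V.obj θ →ₗ[k] W.obj θ) : Prop :=
  (∀ {θ φ : ℝ} (h : Q.covRel θ φ) (v : V.obj θ), f φ (V.map h v) = W.map h (f θ v)) ∧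
  (∀ (θ : ℝ) (v : V.obj (θ + 2 * Real.pi)), f θ (V.per θ v) = W.per θ (f (θ + 2 * Real.pi) v))

/-- Two representations are isomorphic if there is a family of linear isomorphisms
natural with respect to the structure maps and the periodicity isomorphisms. -/
def RepIso (V W : SRep k Q) : Prop :=
  ∃ e : ∀ θ, V.obj θ ≃ₗ[k] W.obj θ,
    (∀ {θ φ : ℝ} (h : Q.covRel θ φ) (v : V.obj θ), e φ (V.map h v) = W.map h (e θ v)) ∧
    (∀ (θ : ℝ) (v : V.obj (θ + 2 * Real.pi)), e θ (V.per θ v) = W.per θ (e (θ + 2 * Real.pi) v))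

/-- `U` is a (direct) summand of `V`. -/
def SummandOf (U V : SRep k Q) : Prop :=
  ∃ (f : ∀ θ, U.obj θ →ₗ[k] V.obj θ) (g : ∀ θ, V.obj θ →ₗ[k] U.obj θ),
    IsHomFam U V f ∧ IsHomFam V U g ∧ ∀ (θ : ℝ) (u : U.obj θ), g θ (f θ u) = u

/-- A representation is nonzero if some of its spaces is nonzero. -/
def Nonzero (V : SRep k Q) : Prop := ∃ (θ : ℝ) (v : V.obj θ), v ≠ 0

/-- Pointwise finite-dimensional. -/
def Pwf (V : SRep k Q) : Prop := ∀ θ, FiniteDimensional k (V.obj θ)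

/-- Binary direct sum of representations. -/
def prod (V W : SRep k Q) : SRep k Q where
  obj θ := V.obj θ × W.obj θ
  map h := (V.map h).prodMap (W.map h)
  map_id θ h := by
    (try dsimp only); rw [V.map_id θ h, W.map_id θ h]; exact LinearMap.prodMap_id
  map_comp h1 h2 h3 := by
    try dsimp only
    rw [V.map_comp h1 h2 h3, W.map_comp h1 h2 h3]
    exact (LinearMap.prodMap_comp _ _ _ _).symm
  per θ := (V.per θ).prodCongr (W.per θ)
  per_map h h' := by
    try dsimp only
    apply LinearMap.ext
    rintro ⟨a, b⟩
    simp only [LinearMap.comp_apply, LinearEquiv.coe_coe, LinearMap.prodMap_apply,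
      LinearEquiv.prodCongr_apply]
    exact Prod.ext (V.per_map_apply h h' a) (W.per_map_apply h h' b)

/-- Arbitrary direct sums of representations. -/
def dsum {B : Type} (A : B → SRep k Q) : SRep k Q where
  obj θ := Π₀ b, (A b).obj θ
  map h := DFinsupp.mapRange.linearMap fun b => (A b).map h
  map_id θ h := by
    try dsimp only
    have : (fun b => (A b).map h) = fun b => (LinearMap.id : (A b).obj θ →ₗ[k] _) := by
      funext b; exact (A b).map_id θ h
    rw [this]; exact DFinsupp.mapRange.linearMap_id
  map_comp h1 h2 h3 := by
    try dsimp only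
    have : (fun b => (A b).map h3) = fun b => ((A b).map h2).comp ((A b).map h1) := by
      funext b; exact (A b).map_comp h1 h2 h3
    rw [this]; exact DFinsupp.mapRange.linearMap_comp _ _
  per θ := DFinsupp.mapRange.linearEquiv fun b => (A b).per θ
  per_map h h' := by
    try dsimp only
    apply LinearMap.ext
    intro x
    ext b
    simp only [LinearMap.comp_apply, LinearEquiv.coe_coe,
      DFinsupp.mapRange.linearEquiv_apply, DFinsupp.mapRange.linearMap_apply,
      DFinsupp.mapRange_apply]
    exact (A b).per_map_apply h h' (x b)

/-- Indecomposability. -/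
def Indecomposable (V : SRep k Q) : Prop :=
  V.Nonzero ∧ ∀ A B : SRep k Q, A.Nonzero → B.Nonzero → ¬ RepIso V (A.prod B)

end SRep
/-! ## Bars -/

/-- The basis of the bar `M_I` at the point `e^{iθ}`: the set `ξ⁻¹(e^{iθ}) ∩ I`. -/
def barIdx (I : Set ℝ) (θ : ℝ) : Type :=
  {β : ℝ // β ∈ I ∧ ∃ n : ℤ, β = θ + 2 * Real.pi * n}

/-- The canonical identification of the bars' bases over `θ + 2π` and `θ`. -/
def barShift (I : Set ℝ) (θ : ℝ) : barIdx I (θ + 2 * Real.pi) ≃ barIdx I θ where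
  toFun b := ⟨b.1, b.2.1, by
    obtain ⟨n, hn⟩ := b.2.2
    exact ⟨n + 1, by push_cast; linarith⟩⟩
  invFun b := ⟨b.1, b.2.1, by
    obtain ⟨n, hn⟩ := b.2.2
    exact ⟨n - 1, by push_cast; linarith⟩⟩
  left_inv b := by apply Subtype.ext; rfl
  right_inv b := by apply Subtype.ext; rfl

variable (k : Type) [Field k]

/-- The structure map of the bar `M_I` along a morphism `θ → φ`:
a basis vector `b_β` is sent to `b_{β - θ + φ}` when `β - θ + φ ∈ I` and to `0`
otherwise. -/
def barMapHom (I : Set ℝ) (θ φ : ℝ) :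
    (barIdx I θ →₀ k) →ₗ[k] (barIdx I φ →₀ k) := by
  classical
  exact Finsupp.linearCombination k (fun β : barIdx I θ =>
    if h : β.1 - θ + φ ∈ I then
      Finsupp.single (⟨β.1 - θ + φ, h, by
        obtain ⟨n, hn⟩ := β.2.2
        exact ⟨n, by rw [hn]; ring⟩⟩ : barIdx I φ) (1 : k)
    else 0)

variable {k}

namespace SRep

variable {Q : AtR}

/-- `V` is (isomorphic to) the bar `M_I` on the bounded interval `I ⊂ ℝ`. -/
def BarOn (I : Set ℝ) (V : SRep k Q) : Prop :=
  I.Nonempty ∧ Bornology.IsBounded I ∧ I.OrdConnected ∧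
  ∃ e : ∀ θ, V.obj θ ≃ₗ[k] (barIdx I θ →₀ k),
    (∀ {θ φ : ℝ} (h : Q.covRel θ φ) (v : V.obj θ),
        e φ (V.map h v) = barMapHom k I θ φ (e θ v)) ∧
    (∀ (θ : ℝ) (v : V.obj (θ + 2 * Real.pi)),
        e θ (V.per θ v) = Finsupp.equivMapDomain (barShift I θ) (e (θ + 2 * Real.pi) v))

/-- `V` is a bar. -/
def IsBar (V : SRep k Q) : Prop := ∃ I : Set ℝ, BarOn I V

end SRep
/-! ## Jordan cells -/

namespace SRep

variable {k : Type} [Field k] {Q : AtR}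

/-- One step of the monodromy: the isomorphism `V(α j) ≃ V(α (j+1))` obtained
from the structure map along the arc (or its inverse, depending on the
orientation of the arc). -/
def step (V : SRep k Q)
    (hiso : ∀ ⦃θ φ : ℝ⦄ (h : Q.covRel θ φ), Function.Bijective (V.map h)) (j : ℤ) :
    V.obj (Q.α j) ≃ₗ[k] V.obj (Q.α (j + 1)) :=
  if h : Q.m = 0 ∨ ¬ Even j then
    LinearEquiv.ofBijective _ (hiso (AtR.covRel_up j h))
  else
    (LinearEquiv.ofBijective _ (hiso (AtR.covRel_down j
      (by push_neg at h; exact h.1) (by push_neg at h; exact h.2)))).symm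

/-- The zig-zag isomorphism from `V(α 0)` to `V(α n)`. -/
def zig (V : SRep k Q)
    (hiso : ∀ ⦃θ φ : ℝ⦄ (h : Q.covRel θ φ), Function.Bijective (V.map h)) :
    (n : ℕ) → (V.obj (Q.α 0) ≃ₗ[k] V.obj (Q.α (n : ℤ)))
  | 0 => V.castO (congrArg Q.α (by norm_num))
  | (n + 1) => ((V.zig hiso n).trans (V.step hiso (n : ℤ))).trans
      (V.castO (congrArg Q.α (by push_cast; ring)))

/-- The monodromy automorphism `V̂` of `V(α 0)`: travel once counterclockwise
around the circle (via `zig`) and come back via the periodicity isomorphism. -/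
def monodromy (V : SRep k Q)
    (hiso : ∀ ⦃θ φ : ℝ⦄ (h : Q.covRel θ φ), Function.Bijective (V.map h)) :
    V.obj (Q.α 0) ≃ₗ[k] V.obj (Q.α 0) :=
  ((V.zig hiso Q.periodN).trans (V.castO Q.α_periodN)).trans (V.per (Q.α 0))

/-- `V` is a Jordan cell: its spaces have a constant finite dimension `d ≥ 1`,
all its structure maps are isomorphisms, and `V(α 0)` admits no direct sum
decomposition into two nonzero subspaces invariant under the monodromy. -/
structure IsJordanCell (V : SRep k Q) : Prop where
  bij : ∀ ⦃θ φ : ℝ⦄ (h : Q.covRel θ φ), Function.Bijective (V.map h)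
  dim : ∃ d : ℕ, 1 ≤ d ∧ ∀ θ, Module.finrank k (V.obj θ) = d
  indec : ∀ U W : Submodule k (V.obj (Q.α 0)), IsCompl U W →
      (∀ u ∈ U, V.monodromy bij u ∈ U) → (∀ w ∈ W, V.monodromy bij w ∈ W) →
      U = ⊥ ∨ W = ⊥

end SRep
/-! ## Restriction -/

/-- The periodization of a subset of `ℝ`: the full preimage under `ξ` of its image
in the circle. -/
def periodize (s : Set ℝ) : Set ℝ := {θ | ∃ n : ℤ, θ + 2 * Real.pi * n ∈ s}

lemma periodize_shift (s : Set ℝ) (θ : ℝ) :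
    θ ∈ periodize s ↔ θ + 2 * Real.pi ∈ periodize s := by
  constructor
  · rintro ⟨n, hn⟩
    refine ⟨n - 1, ?_⟩
    push_cast
    rw [show θ + 2 * Real.pi + 2 * Real.pi * ((n : ℝ) - 1) = θ + 2 * Real.pi * (n : ℝ) from
      by ring]
    exact hn
  · rintro ⟨n, hn⟩
    refine ⟨n + 1, ?_⟩
    push_cast
    rw [show θ + 2 * Real.pi * ((n : ℝ) + 1) = θ + 2 * Real.pi + 2 * Real.pi * (n : ℝ) from
      by ring]
    exact hn

namespace SRep

open Classical

variable {k : Type} [Field k] {Q : AtR}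

/-- The restriction `V|_A` of a representation to a (2π-periodic) subset `A ⊂ ℝ`
corresponding to a subset of the circle.  Its space at `θ ∈ A` is `V(θ)` and `0`
elsewhere; its structure map along a morphism `θ → φ` is `V(θ,φ)` when every
point through which the morphism factors lies in `A` (the set of such points
being the interval `[min θ φ, max θ φ]`), and `0` otherwise. -/
def restrict (V : SRep k Q) (A : Set ℝ) (hA : ∀ θ, θ ∈ A ↔ θ + 2 * Real.pi ∈ A) :
    SRep k Q where
  obj θ := PLift (θ ∈ A) → V.obj θ
  map {θ φ} h :=
    { toFun := fun F _ =>
        if c : Set.Icc (min θ φ) (max θ φ) ⊆ A then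
          V.map h (F ⟨c ⟨min_le_left θ φ, le_max_left θ φ⟩⟩) else 0
      map_add' := by
        intro F G; funext hφ
        by_cases c : Set.Icc (min θ φ) (max θ φ) ⊆ A <;> simp [c]
      map_smul' := by
        intro a F; funext hφ
        by_cases c : Set.Icc (min θ φ) (max θ φ) ⊆ A <;> simp [c] }
  map_id θ h := by
    apply LinearMap.ext; intro F; funext hφ
    have c : Set.Icc (min θ θ) (max θ θ) ⊆ A := by
      rw [min_self, max_self, Set.Icc_self]
      exact Set.singleton_subset_iff.mpr hφ.down
    simp only [LinearMap.coe_mk, AddHom.coe_mk, LinearMap.id_coe, id_eq]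
    rw [dif_pos c, V.map_id θ h]
    rfl
  map_comp {θ φ ψ} h1 h2 h3 := by
    apply LinearMap.ext; intro F; funext hψ
    have hkey := AtR.covRel_hull h1 h2
    have s1 : Set.Icc (min θ φ) (max θ φ) ⊆ Set.Icc (min θ ψ) (max θ ψ) :=
      Set.Icc_subset_Icc (le_min (min_le_left θ ψ) hkey.1) (max_le (le_max_left θ ψ) hkey.2)
    have s2 : Set.Icc (min φ ψ) (max φ ψ) ⊆ Set.Icc (min θ ψ) (max θ ψ) :=
      Set.Icc_subset_Icc (le_min hkey.1 (min_le_right θ ψ)) (max_le hkey.2 (le_max_right θ ψ))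
    by_cases c1 : Set.Icc (min θ φ) (max θ φ) ⊆ A
    · by_cases c2 : Set.Icc (min φ ψ) (max φ ψ) ⊆ A
      · have c3 : Set.Icc (min θ ψ) (max θ ψ) ⊆ A := by
          intro z hz
          rcases le_total θ ψ with hθψ | hθψ
          · rw [min_eq_left hθψ, max_eq_right hθψ] at hz
            rcases le_total z φ with hzφ | hzφ
            · exact c1 ⟨le_trans (min_le_left θ φ) hz.1, le_trans hzφ (le_max_right θ φ)⟩
            · exact c2 ⟨le_trans (min_le_left φ ψ) hzφ, le_trans hz.2 (le_max_right φ ψ)⟩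
          · rw [min_eq_right hθψ, max_eq_left hθψ] at hz
            rcases le_total z φ with hzφ | hzφ
            · exact c2 ⟨le_trans (min_le_right φ ψ) hz.1, le_trans hzφ (le_max_left φ ψ)⟩
            · exact c1 ⟨le_trans (min_le_right θ φ) hzφ, le_trans hz.2 (le_max_left θ φ)⟩
        simp only [LinearMap.coe_mk, AddHom.coe_mk, LinearMap.comp_apply]
        rw [dif_pos c3, dif_pos c2, dif_pos c1, V.map_comp h1 h2 h3]
        rfl
      · have c3 : ¬ Set.Icc (min θ ψ) (max θ ψ) ⊆ A := fun c3 => c2 fun z hz => c3 (s2 hz)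
        simp only [LinearMap.coe_mk, AddHom.coe_mk, LinearMap.comp_apply]
        rw [dif_neg c3, dif_neg c2]
    · have c3 : ¬ Set.Icc (min θ ψ) (max θ ψ) ⊆ A := fun c3 => c1 fun z hz => c3 (s1 hz)
      simp only [LinearMap.coe_mk, AddHom.coe_mk, LinearMap.comp_apply]
      rw [dif_neg c3]
      by_cases c2 : Set.Icc (min φ ψ) (max φ ψ) ⊆ A
      · rw [dif_pos c2, dif_neg c1, map_zero]
      · rw [dif_neg c2]
  per θ :=
    { toFun := fun F hθ => V.per θ (F ⟨(hA θ).mp hθ.down⟩)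
      map_add' := by intro F G; funext hθ; simp
      map_smul' := by intro a F; funext hθ; simp
      invFun := fun G h2 => (V.per θ).symm (G ⟨(hA θ).mpr h2.down⟩)
      left_inv := by intro F; funext h2; simp
      right_inv := by intro G; funext hθ; simp }
  per_map {θ φ} h h' := by
    apply LinearMap.ext; intro F; funext hφ
    have e1 : min (θ + 2 * Real.pi) (φ + 2 * Real.pi) = min θ φ + 2 * Real.pi :=
      min_add_add_right θ φ _
    have e2 : max (θ + 2 * Real.pi) (φ + 2 * Real.pi) = max θ φ + 2 * Real.pi :=
      max_add_add_right θ φ _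
    have hcc : (Set.Icc (min (θ + 2 * Real.pi) (φ + 2 * Real.pi))
        (max (θ + 2 * Real.pi) (φ + 2 * Real.pi)) ⊆ A) ↔
        (Set.Icc (min θ φ) (max θ φ) ⊆ A) := by
      rw [e1, e2]
      constructor
      · intro c z hz
        rw [hA z]
        exact c ⟨by linarith [hz.1], by linarith [hz.2]⟩
      · intro c z hz
        have h2 : z - 2 * Real.pi ∈ Set.Icc (min θ φ) (max θ φ) :=
          ⟨by linarith [hz.1], by linarith [hz.2]⟩
        have h3 := (hA (z - 2 * Real.pi)).mp (c h2)
        simpa using h3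
    simp only [LinearMap.coe_mk, AddHom.coe_mk, LinearMap.comp_apply, LinearEquiv.coe_coe,
      LinearEquiv.coe_mk]
    by_cases c : Set.Icc (min θ φ) (max θ φ) ⊆ A
    · rw [dif_pos c, dif_pos (hcc.mpr c)]
      exact V.per_map_apply h h' _
    · rw [dif_neg c, dif_neg (fun cc => c (hcc.mp cc)), map_zero]

/-- `V` is finitistic: it is pointwise finite-dimensional and for each arc
`R̄_n = [α n, α (n+1)]`, every bar in the bar code decomposition of the
restriction `V|_{R̄_n}` has support touching an endpoint of the arc. -/
def Finitistic (V : SRep k Q) : Prop :=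
  Pwf V ∧ ∀ n : ℤ, ∃ (B : Type) (Wb : B → SRep k Q) (I : B → Set ℝ),
    (∀ b, BarOn (I b) (Wb b) ∧ I b ⊆ Set.Icc (Q.α n) (Q.α (n + 1)) ∧
      (Q.α n ∈ I b ∨ Q.α (n + 1) ∈ I b)) ∧
    RepIso (V.restrict (periodize (Set.Icc (Q.α n) (Q.α (n + 1))))
      (periodize_shift _)) (dsum Wb)

end SRep
/-! ## Representations of (finite) quivers of type Ã_n

An `Ã_n` quiver has `N = n + 1` vertices, indexed by `ZMod N`, arranged
counterclockwise in a cycle, with exactly one arrow between the vertices `i` and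
`i + 1` for each `i : ZMod N`; the orientation function `o` records its direction
(`o i = true` iff the arrow goes `i → i + 1`). -/

/-- A representation of the `Ã_{N-1}` quiver with orientation `o`. -/
structure CycRep (k : Type) [Field k] (N : ℕ) (o : ZMod N → Bool) where
  M : ZMod N → Type
  [instAdd : ∀ i, AddCommGroup (M i)]
  [instMod : ∀ i, Module k (M i)]
  up : ∀ i : ZMod N, o i = true → (M i →ₗ[k] M (i + 1))
  down : ∀ i : ZMod N, o i = false → (M (i + 1) →ₗ[k] M i)

attribute [instance] CycRep.instAdd CycRep.instMod

namespace CycRep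

variable {k : Type} [Field k] {N : ℕ} {o : ZMod N → Bool}

/-- Transport along an equality of vertices. -/
def castM (A : CycRep k N o) {i i' : ZMod N} (h : i = i') : A.M i ≃ₗ[k] A.M i' :=
  h ▸ LinearEquiv.refl k (A.M i)

/-- Isomorphism of representations of the `Ã_{N-1}` quiver. -/
def Iso (A B : CycRep k N o) : Prop :=
  ∃ e : ∀ i, A.M i ≃ₗ[k] B.M i,
    (∀ (i : ZMod N) (h : o i = true) (v : A.M i),
        e (i + 1) (A.up i h v) = B.up i h (e i v)) ∧
    (∀ (i : ZMod N) (h : o i = false) (v : A.M (i + 1)),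
        e i (A.down i h v) = B.down i h (e (i + 1) v))

def Nonzero (A : CycRep k N o) : Prop := ∃ (i : ZMod N) (v : A.M i), v ≠ 0

/-- Binary direct sum. -/
def prod (A B : CycRep k N o) : CycRep k N o where
  M i := A.M i × B.M i
  up i h := (A.up i h).prodMap (B.up i h)
  down i h := (A.down i h).prodMap (B.down i h)

/-- Arbitrary direct sum. -/
def dsum {B : Type} (A : B → CycRep k N o) : CycRep k N o where
  M i := Π₀ b, (A b).M i
  up i h := DFinsupp.mapRange.linearMap fun b => (A b).up i h
  down i h := DFinsupp.mapRange.linearMap fun b => (A b).down i h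

def Indecomposable (A : CycRep k N o) : Prop :=
  A.Nonzero ∧ ∀ B C : CycRep k N o, B.Nonzero → C.Nonzero → ¬ Iso A (B.prod C)

end CycRep

/-- The basis of the bar on the interval `{a, ..., b} ⊂ ℤ` at the vertex `i`:
integers in the interval congruent to `i` mod `N`. -/
def cycIdx (N : ℕ) (a b : ℤ) (i : ZMod N) : Type :=
  {m : ℤ // m ∈ Set.Icc a b ∧ ((m : ZMod N) = i)}

variable (k : Type) [Field k]

open Classical in
/-- The bar's map along an arrow `i → i + 1` : `b_m ↦ b_{m+1}` when `m+1` stays in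
the interval, and `0` otherwise. -/
def cycBarUp (N : ℕ) (a b : ℤ) (i : ZMod N) :
    (cycIdx N a b i →₀ k) →ₗ[k] (cycIdx N a b (i + 1) →₀ k) :=
  Finsupp.linearCombination k (fun m : cycIdx N a b i =>
    if hm : m.1 + 1 ∈ Set.Icc a b then
      Finsupp.single (⟨m.1 + 1, hm, by push_cast; rw [m.2.2]⟩ : cycIdx N a b (i + 1)) (1 : k)
    else 0)

open Classical in
/-- The bar's map along an arrow `i + 1 → i` : `b_m ↦ b_{m-1}` when `m-1` stays in
the interval, and `0` otherwise. -/
def cycBarDown (N : ℕ) (a b : ℤ) (i : ZMod N) :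
    (cycIdx N a b (i + 1) →₀ k) →ₗ[k] (cycIdx N a b i →₀ k) :=
  Finsupp.linearCombination k (fun m : cycIdx N a b (i + 1) =>
    if hm : m.1 - 1 ∈ Set.Icc a b then
      Finsupp.single (⟨m.1 - 1, hm, by push_cast; rw [m.2.2]; ring⟩ : cycIdx N a b i) (1 : k)
    else 0)

variable {k}

namespace CycRep

variable {k : Type} [Field k] {N : ℕ} {o : ZMod N → Bool}

/-- `A` is (isomorphic to) the bar on the interval `{a, ..., b}` of `ℤ`. -/
def BarOn (a b : ℤ) (A : CycRep k N o) : Prop :=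
  a ≤ b ∧ ∃ e : ∀ i, A.M i ≃ₗ[k] (cycIdx N a b i →₀ k),
    (∀ (i : ZMod N) (h : o i = true) (v : A.M i),
        e (i + 1) (A.up i h v) = cycBarUp k N a b i (e i v)) ∧
    (∀ (i : ZMod N) (h : o i = false) (v : A.M (i + 1)),
        e i (A.down i h v) = cycBarDown k N a b i (e (i + 1) v))

def IsBar (A : CycRep k N o) : Prop := ∃ a b : ℤ, BarOn a b A

/-- One step `M i ≃ M (i+1)` of the monodromy of a representation all of whose
arrow maps are isomorphisms. -/
def stepC (A : CycRep k N o)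
    (hup : ∀ (i : ZMod N) (h : o i = true), Function.Bijective (A.up i h))
    (hdown : ∀ (i : ZMod N) (h : o i = false), Function.Bijective (A.down i h))
    (i : ZMod N) : A.M i ≃ₗ[k] A.M (i + 1) :=
  if h : o i = true then LinearEquiv.ofBijective _ (hup i h)
  else (LinearEquiv.ofBijective _ (hdown i (by revert h; cases o i <;> simp))).symm

def zigC (A : CycRep k N o)
    (hup : ∀ (i : ZMod N) (h : o i = true), Function.Bijective (A.up i h))
    (hdown : ∀ (i : ZMod N) (h : o i = false), Function.Bijective (A.down i h)) :
    (n : ℕ) → (A.M 0 ≃ₗ[k] A.M (n : ZMod N))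
  | 0 => A.castM (by norm_num)
  | (n + 1) => ((A.zigC hup hdown n).trans (A.stepC hup hdown (n : ZMod N))).trans
      (A.castM (by push_cast; ring))

/-- The monodromy `M̂ : M 0 ≃ M 0` obtained by composing the arrow maps and their
inverses once around the cycle. -/
def monodromyC (A : CycRep k N o)
    (hup : ∀ (i : ZMod N) (h : o i = true), Function.Bijective (A.up i h))
    (hdown : ∀ (i : ZMod N) (h : o i = false), Function.Bijective (A.down i h)) :
    A.M 0 ≃ₗ[k] A.M 0 :=
  (A.zigC hup hdown N).trans (A.castM (by simp))

/-- `A` is a Jordan cell representation of the `Ã_{N-1}` quiver. -/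
structure IsJordan (A : CycRep k N o) : Prop where
  bijUp : ∀ (i : ZMod N) (h : o i = true), Function.Bijective (A.up i h)
  bijDown : ∀ (i : ZMod N) (h : o i = false), Function.Bijective (A.down i h)
  dim : ∃ d : ℕ, 1 ≤ d ∧ ∀ i, Module.finrank k (A.M i) = d
  indec : ∀ U W : Submodule k (A.M 0), IsCompl U W →
      (∀ u ∈ U, A.monodromyC bijUp bijDown u ∈ U) →
      (∀ w ∈ W, A.monodromyC bijUp bijDown w ∈ W) → U = ⊥ ∨ W = ⊥

end CycRep
/-! ## Partitions of the circle and push downs -/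

/-- A finite partition of the circle into (at least two) path-connected parts,
presented on the universal cover: `2π`-periodically ordered intervals `J j`
(`j : ℤ`), with `J (j + N)` the translate of `J j`; the parts of the circle are
the images of the `J j`, and `j` reduces mod `N` to the index of the part. -/
structure CircPartition (Q : AtR) where
  N : ℕ
  hN : 2 ≤ N
  J : ℤ → Set ℝ
  nonempty : ∀ j, (J j).Nonempty
  ordconn : ∀ j, (J j).OrdConnected
  ordered : ∀ {j j' : ℤ}, j < j' → ∀ x ∈ J j, ∀ y ∈ J j', x < y
  cover : ∀ θ : ℝ, ∃ j, θ ∈ J j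
  jper : ∀ (j : ℤ) (θ : ℝ), θ ∈ J j ↔ θ + 2 * Real.pi ∈ J (j + N)

namespace CircPartition

variable {Q : AtR} (C : CircPartition Q)

/-- The index of the part containing `θ`. -/
def partIdx (θ : ℝ) : ℤ := Classical.choose (C.cover θ)

lemma mem_partIdx (θ : ℝ) : θ ∈ C.J (C.partIdx θ) := Classical.choose_spec (C.cover θ)

lemma partIdx_eq {θ : ℝ} {j : ℤ} (h : θ ∈ C.J j) : C.partIdx θ = j := by
  by_contra hne
  rcases lt_or_gt_of_ne hne with hlt | hlt
  · exact lt_irrefl θ (C.ordered hlt _ (C.mem_partIdx θ) _ h)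
  · exact lt_irrefl θ (C.ordered hlt _ h _ (C.mem_partIdx θ))

lemma partIdx_shift (θ : ℝ) : C.partIdx (θ + 2 * Real.pi) = C.partIdx θ + C.N :=
  C.partIdx_eq ((C.jper _ _).mp (C.mem_partIdx θ))

/-- The index of the part containing `θ`, as a vertex of the auxiliary quiver. -/
def partZ (θ : ℝ) : ZMod C.N := ((C.partIdx θ : ℤ) : ZMod C.N)

lemma partZ_shift (θ : ℝ) : C.partZ (θ + 2 * Real.pi) = C.partZ θ := by
  unfold partZ
  rw [C.partIdx_shift θ]
  push_cast
  simp

lemma partZ_congr {θ φ : ℝ} (hp : C.partIdx θ = C.partIdx φ) : C.partZ θ = C.partZ φ := by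
  unfold partZ; rw [hp]

lemma partZ_succ {θ φ : ℝ} (hp : C.partIdx φ = C.partIdx θ + 1) :
    C.partZ θ + 1 = C.partZ φ := by
  unfold partZ; rw [hp]; push_cast; ring

lemma partZ_pred {θ φ : ℝ} (hp : C.partIdx θ = C.partIdx φ + 1) :
    C.partZ θ = C.partZ φ + 1 := by
  unfold partZ; rw [hp]; push_cast; ring

/-- There is an arrow from the part of `J j` to the part of `J (j+1)` in the
auxiliary quiver (their union being automatically path-connected). -/
def dirUp (j : ℤ) : Prop := ∃ x ∈ C.J j, ∃ y ∈ C.J (j + 1), Q.covRel x y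

/-- There is an arrow from the part of `J (j+1)` to the part of `J j`. -/
def dirDown (j : ℤ) : Prop := ∃ x ∈ C.J (j + 1), ∃ y ∈ C.J j, Q.covRel x y

end CircPartition

namespace SRep

variable {k : Type} [Field k] {Q : AtR}

/-- `U` is the push down to the continuous quiver of the representation `A` of the
auxiliary `Ã_{N-1}` quiver of the partition `C` (with orientation `o`):
`U` is constant equal to `A.M i` on the `i`-th part, with identity maps within a
part, the maps of `A` across boundaries of parts, and the evident periodicity. -/
def PushdownOf (C : CircPartition Q) (o : ZMod C.N → Bool) (A : CycRep k C.N o)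
    (U : SRep k Q) : Prop :=
  ∃ e : ∀ θ, U.obj θ ≃ₗ[k] A.M (C.partZ θ),
    (∀ {θ φ : ℝ} (h : Q.covRel θ φ) (hp : C.partIdx θ = C.partIdx φ) (v : U.obj θ),
        e φ (U.map h v) = A.castM (C.partZ_congr hp) (e θ v)) ∧
    (∀ {θ φ : ℝ} (h : Q.covRel θ φ) (hp : C.partIdx φ = C.partIdx θ + 1)
        (ht : o (C.partZ θ) = true) (v : U.obj θ),
        e φ (U.map h v) = A.castM (C.partZ_succ hp) (A.up (C.partZ θ) ht (e θ v))) ∧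
    (∀ {θ φ : ℝ} (h : Q.covRel θ φ) (hp : C.partIdx θ = C.partIdx φ + 1)
        (hf : o (C.partZ φ) = false) (v : U.obj θ),
        e φ (U.map h v) = A.down (C.partZ φ) hf (A.castM (C.partZ_pred hp) (e θ v))) ∧
    (∀ (θ : ℝ) (v : U.obj (θ + 2 * Real.pi)),
        e θ (U.per θ v) = A.castM (C.partZ_shift θ) (e (θ + 2 * Real.pi) v))

/-- Transport between the values of `V` at representative points whose indices
agree modulo the period, using the periodicity isomorphism if needed. -/
def ptBridge (V : SRep k Q) (pt : ℤ → ℝ) (Nn : ℕ)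
    (hper : ∀ j : ℤ, pt (j + (Nn : ℤ)) = pt j + 2 * Real.pi) {a b : ℤ}
    (h : a = b ∨ a = b + (Nn : ℤ)) : V.obj (pt a) ≃ₗ[k] V.obj (pt b) :=
  if he : a = b then V.castO (congrArg pt he)
  else (V.castO (show pt a = pt b + 2 * Real.pi by
      rw [h.resolve_left he]; exact hper b)).trans (V.per (pt b))

lemma zmod_val_succ {N : ℕ} (hN : 2 ≤ N) (i : ZMod N) :
    (((i + 1 : ZMod N).val : ℤ) = (i.val : ℤ) + 1) ∨
      ((i.val : ℤ) + 1 = ((i + 1 : ZMod N).val : ℤ) + (N : ℤ)) := by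
  haveI : NeZero N := ⟨by omega⟩
  haveI : Fact (1 < N) := ⟨by omega⟩
  have hval : (i + 1 : ZMod N).val = (i.val + 1) % N := by
    rw [ZMod.val_add, ZMod.val_one]
  have hlt : i.val < N := ZMod.val_lt i
  rcases Nat.lt_or_ge (i.val + 1) N with h | h
  · left; rw [hval, Nat.mod_eq_of_lt h]; push_cast; ring
  · right
    have he : i.val + 1 = N := by omega
    rw [hval, he, Nat.mod_self]
    push_cast
    omega

/-- The auxiliary representation `M_V` of the auxiliary quiver of a partition `C`,
given by the values of `V` at the representative points `pt`. -/
def auxOfPoints (V : SRep k Q) (C : CircPartition Q) (o : ZMod C.N → Bool) (pt : ℤ → ℝ)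
    (hper : ∀ j : ℤ, pt (j + (C.N : ℤ)) = pt j + 2 * Real.pi)
    (hup : ∀ (i : ZMod C.N), o i = true → Q.covRel (pt (i.val : ℤ)) (pt ((i.val : ℤ) + 1)))
    (hdown : ∀ (i : ZMod C.N), o i = false → Q.covRel (pt ((i.val : ℤ) + 1)) (pt (i.val : ℤ))) :
    CycRep k C.N o where
  M i := V.obj (pt (i.val : ℤ))
  up i h := (V.ptBridge pt C.N hper
      ((zmod_val_succ C.hN i).imp Eq.symm id)).toLinearMap ∘ₗ V.map (hup i h)
  down i h := V.map (hdown i h) ∘ₗ (V.ptBridge pt C.N hper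
      ((zmod_val_succ C.hN i).imp Eq.symm id)).symm.toLinearMap

/-- `U` is the refinement of `V` with respect to the partition `C` and the choice
of representative points `pt`: `U(θ) = V(pt (partIdx θ))`, with structure maps
induced by those of `V` between representative points. -/
def RefinementOf (V : SRep k Q) (C : CircPartition Q) (pt : ℤ → ℝ)
    (hper : ∀ j : ℤ, pt (j + (C.N : ℤ)) = pt j + 2 * Real.pi) (U : SRep k Q) : Prop :=
  (∀ j, pt j ∈ C.J j) ∧
  ∃ e : ∀ θ, U.obj θ ≃ₗ[k] V.obj (pt (C.partIdx θ)),
    (∀ {θ φ : ℝ} (h : Q.covRel θ φ) (hp : C.partIdx θ = C.partIdx φ) (v : U.obj θ),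
        e φ (U.map h v) = V.castO (congrArg pt hp) (e θ v)) ∧
    (∀ {θ φ : ℝ} (h : Q.covRel θ φ)
        (hc : Q.covRel (pt (C.partIdx θ)) (pt (C.partIdx φ))) (v : U.obj θ),
        e φ (U.map h v) = V.map hc (e θ v)) ∧
    (∀ (θ : ℝ) (v : U.obj (θ + 2 * Real.pi)),
        e θ (U.per θ v) = V.per (pt (C.partIdx θ))
          ((V.castO (show pt (C.partIdx (θ + 2 * Real.pi)) = pt (C.partIdx θ) + 2 * Real.pi by
            rw [C.partIdx_shift θ]; exact hper _)) (e (θ + 2 * Real.pi) v)))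

end SRep
/-! ## The endomorphism ring -/

namespace SRep

variable {k : Type} [Field k] {Q : AtR}

/-- The endomorphism ring of a representation: the subring of
`∀ θ, End (V θ)` consisting of the natural families (with multiplication given by
pointwise composition). -/
def endSubring (V : SRep k Q) : Subring (∀ θ, Module.End k (V.obj θ)) where
  carrier := {f | IsHomFam V V f}
  mul_mem' := by
    rintro a b ⟨ha1, ha2⟩ ⟨hb1, hb2⟩
    constructor
    · intro θ φ h v
      simp only [Pi.mul_apply, Module.End.mul_apply]
      rw [hb1 h v, ha1 h]
    · intro θ v
      simp only [Pi.mul_apply, Module.End.mul_apply]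
      rw [hb2 θ v, ha2 θ]
  one_mem' := by
    constructor
    · intro θ φ h v; simp
    · intro θ v; simp
  add_mem' := by
    rintro a b ⟨ha1, ha2⟩ ⟨hb1, hb2⟩
    constructor
    · intro θ φ h v
      simp only [Pi.add_apply, LinearMap.add_apply]
      rw [ha1 h v, hb1 h v, map_add]
    · intro θ v
      simp only [Pi.add_apply, LinearMap.add_apply]
      rw [ha2 θ v, hb2 θ v, map_add]
  zero_mem' := by
    constructor
    · intro θ φ h v; simp
    · intro θ v; simp
  neg_mem' := by
    rintro a ⟨ha1, ha2⟩
    constructor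
    · intro θ φ h v
      simp only [Pi.neg_apply, LinearMap.neg_apply]
      rw [ha1 h v, map_neg]
    · intro θ v
      simp only [Pi.neg_apply, LinearMap.neg_apply]
      rw [ha2 θ v, map_neg]

end SRep

/-!
An endomorphism `f` of the push down `U`, read through the identifications `U(θ) ≅ M(P)` for
`θ ∈ P`, does not depend on the point `θ` of the part `P`: two points of one arc of a part are
joined by a morphism of `Ã_ℝ`, on which `U` acts by the identity and with which `f` commutes, and
the same argument applies to the periodicity isomorphisms. So `f` descends to a family `g` of
endomorphisms of the spaces of `M`; `g` commutes with the arrows of `Q` because each arrow is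
realised by a morphism of `Ã_ℝ` between the two parts. If `f` is idempotent so is `g`, hence
`g ∈ {0, 1}` by indecomposability of `M`, and then `f ∈ {0, 1}`.
-/

namespace AtR

variable {Q : AtR}

lemma α_add_periodN (j : ℤ) : Q.α (j + Q.periodN) = Q.α j + 2 * Real.pi := by
  unfold periodN
  split_ifs with hm
  · rw [Q.cyc hm, Q.cyc hm]; push_cast; ring
  · exact_mod_cast Q.per hm j

lemma α_int_mul_periodN (t : ℤ) : Q.α (t * Q.periodN) = Q.α 0 + t * (2 * Real.pi) := by
  induction t using Int.induction_on with
  | zero => simp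
  | succ t ih => rw [add_mul, one_mul, α_add_periodN, ih]; push_cast; ring
  | pred t ih =>
    have h := α_add_periodN (Q := Q) ((-(t : ℤ) - 1) * Q.periodN)
    rw [show (-(t : ℤ) - 1) * Q.periodN + Q.periodN = -(t : ℤ) * Q.periodN by ring, ih] at h
    push_cast at h ⊢
    linarith

lemma exists_α_le (x : ℝ) : ∃ n, Q.α n ≤ x := by
  refine ⟨⌊(x - Q.α 0) / (2 * Real.pi)⌋ * Q.periodN, ?_⟩
  have h := Int.floor_le ((x - Q.α 0) / (2 * Real.pi))
  rw [le_div_iff₀ (by positivity)] at h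
  rw [α_int_mul_periodN]
  linarith

lemma exists_le_α (x : ℝ) : ∃ n, x ≤ Q.α n := by
  refine ⟨⌈(x - Q.α 0) / (2 * Real.pi)⌉ * Q.periodN, ?_⟩
  have h := Int.le_ceil ((x - Q.α 0) / (2 * Real.pi))
  rw [div_le_iff₀ (by positivity)] at h
  rw [α_int_mul_periodN]
  linarith

lemma covRel_or_covRel {θ φ : ℝ} {n : ℤ} (hθ : θ ∈ Icc (Q.α n) (Q.α (n + 1)))
    (hφ : φ ∈ Icc (Q.α n) (Q.α (n + 1))) (hle : θ ≤ φ) :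
    Q.covRel θ φ ∨ Q.covRel φ θ := by
  unfold covRel
  by_cases hm : Q.m = 0
  · exact Or.inl (by rwa [if_pos hm])
  · rw [if_neg hm, if_neg hm]
    rcases Int.even_or_odd n with he | ho
    · exact Or.inr ⟨n, hφ, hθ, Or.inl ⟨he, hle⟩⟩
    · exact Or.inl ⟨n, hθ, hφ, Or.inr ⟨Int.not_even_iff_odd.mpr ho, hle⟩⟩

lemma eq_of_forall_arc {X : Type*} {S : Set ℝ} (hS : S.OrdConnected) {G : ℝ → X}
    (hG : ∀ n : ℤ, ∀ θ ∈ S, ∀ φ ∈ S, Q.α n ≤ θ → θ ≤ φ → φ ≤ Q.α (n + 1) → G θ = G φ)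
    {θ φ : ℝ} (hθ : θ ∈ S) (hφ : φ ∈ S) : G θ = G φ := by
  wlog hle : θ ≤ φ generalizing θ φ
  · exact (this hφ hθ (le_of_not_ge hle)).symm
  obtain ⟨m, hm⟩ := exists_le_α (Q := Q) φ
  obtain ⟨n₀, hn₀⟩ := exists_α_le (Q := Q) θ
  suffices key : ∀ n ≤ m, ∀ θ ∈ S, Q.α n ≤ θ → θ ≤ φ → G θ = G φ from
    key (min n₀ m) (min_le_right _ _) θ hθ ((Q.mono.monotone (min_le_left _ _)).trans hn₀) hle
  intro n hn
  induction n, hn using Int.leInductionDown with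
  | base =>
    intro θ hθ hαθ hθφ
    exact hG m θ hθ φ hφ hαθ hθφ (hm.trans (Q.mono.monotone (by omega)))
  | pred n _ ih =>
    intro θ hθ hαθ hθφ
    rcases le_or_gt φ (Q.α n) with hφn | hφn
    · exact hG (n - 1) θ hθ φ hφ hαθ hθφ (by rwa [sub_add_cancel])
    rcases le_or_gt θ (Q.α n) with hθn | hθn
    · have hαS : Q.α n ∈ S := hS.out hθ hφ ⟨hθn, hφn.le⟩
      exact (hG (n - 1) θ hθ _ hαS hαθ hθn (by rw [sub_add_cancel])).trans
        (ih _ hαS le_rfl hφn.le)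
    · exact ih θ hθ hθn.le hθφ

end AtR

namespace CircPartition

variable {Q : AtR} (C : CircPartition Q)

lemma partIdx_add_int_mul (θ : ℝ) (t : ℤ) :
    C.partIdx (θ + t * (2 * Real.pi)) = C.partIdx θ + t * C.N := by
  induction t using Int.induction_on with
  | zero => simp
  | succ t ih =>
    rw [show θ + ((t + 1 : ℤ) : ℝ) * (2 * Real.pi)
      = θ + ((t : ℤ) : ℝ) * (2 * Real.pi) + 2 * Real.pi by push_cast; ring, C.partIdx_shift, ih]
    ring
  | pred t ih =>
    have h := C.partIdx_shift (θ + ((-(t : ℤ) - 1 : ℤ) : ℝ) * (2 * Real.pi))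
    rw [show θ + ((-(t : ℤ) - 1 : ℤ) : ℝ) * (2 * Real.pi) + 2 * Real.pi
      = θ + ((-(t : ℤ) : ℤ) : ℝ) * (2 * Real.pi) by push_cast; ring, ih] at h
    linarith

lemma partZ_surjective : Function.Surjective C.partZ := by
  intro i
  obtain ⟨j, rfl⟩ := ZMod.intCast_surjective i
  obtain ⟨θ, hθ⟩ := C.nonempty j
  exact ⟨θ, by rw [partZ, C.partIdx_eq hθ]⟩

lemma exists_partIdx_add_int_mul_eq {θ φ : ℝ} (h : C.partZ θ = C.partZ φ) :
    ∃ t : ℤ, C.partIdx (θ + t * (2 * Real.pi)) = C.partIdx φ := by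
  obtain ⟨t, ht⟩ := (ZMod.intCast_eq_intCast_iff_dvd_sub _ _ _).mp h
  exact ⟨t, by rw [partIdx_add_int_mul]; linarith⟩

end CircPartition

lemma Function.Surjective.exists_eq_comp_of_sigma_eq {X I : Type*} {β : I → Type*}
    {p : X → I} (hp : Function.Surjective p) (F : ∀ x, β (p x))
    (hF : ∀ x y, p x = p y → (⟨p x, F x⟩ : Sigma β) = ⟨p y, F y⟩) :
    ∃ g : ∀ i, β i, ∀ x, F x = g (p x) := by
  choose q hq using hp
  refine ⟨fun i => cast (congrArg β (hq i)) (F (q i)), fun x => eq_of_heq ?_⟩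
  exact (Sigma.mk.inj_iff.mp (hF x (q (p x)) (hq _).symm)).2.trans (cast_heq _ _).symm

namespace CycRep

variable {k : Type} [Field k] {N : ℕ} {o : ZMod N → Bool} (A : CycRep k N o)

lemma sigma_mk_eq_of_castM {i j : ZMod N} (h : i = j) (a : Module.End k (A.M i))
    (b : Module.End k (A.M j)) (hab : ∀ w, A.castM h (a w) = b (A.castM h w)) :
    (⟨i, a⟩ : Σ i, Module.End k (A.M i)) = ⟨j, b⟩ := by
  subst h
  exact congrArg _ (LinearMap.ext hab)

lemma apply_castM (g : ∀ i, Module.End k (A.M i)) {i j : ZMod N} (h : i = j)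
    (w : A.M i) : g j (A.castM h w) = A.castM h (g i w) := by
  subst h; rfl

def IsSubrep (P : ∀ i, Submodule k (A.M i)) : Prop :=
  (∀ i h, ∀ v ∈ P i, A.up i h v ∈ P (i + 1)) ∧ (∀ i h, ∀ v ∈ P (i + 1), A.down i h v ∈ P i)

def subrep (P : ∀ i, Submodule k (A.M i)) (hP : A.IsSubrep P) : CycRep k N o where
  M i := P i
  up i h := (A.up i h).restrict (hP.1 i h)
  down i h := (A.down i h).restrict (hP.2 i h)

lemma nonzero_subrep_iff {P : ∀ i, Submodule k (A.M i)} (hP : A.IsSubrep P) :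
    (A.subrep P hP).Nonzero ↔ ∃ i, P i ≠ ⊥ := by
  simp only [Nonzero, Submodule.ne_bot_iff]
  exact exists_congr fun i => ⟨fun ⟨⟨x, hx⟩, h⟩ => ⟨x, hx, fun h0 => h (Subtype.ext h0)⟩,
    fun ⟨x, hx, h⟩ => ⟨⟨x, hx⟩, fun h0 => h (congrArg Subtype.val h0)⟩⟩

lemma iso_prod_subrep {P P' : ∀ i, Submodule k (A.M i)} (hP : A.IsSubrep P)
    (hP' : A.IsSubrep P') (hc : ∀ i, IsCompl (P i) (P' i)) :
    Iso A ((A.subrep P hP).prod (A.subrep P' hP')) := by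
  refine ⟨fun i => (Submodule.prodEquivOfIsCompl _ _ (hc i)).symm, fun i h v => ?_,
    fun i h v => ?_⟩ <;>
  · apply (Submodule.prodEquivOfIsCompl _ _ (hc _)).injective
    erw [LinearEquiv.apply_symm_apply, Submodule.coe_prodEquivOfIsCompl']
    conv_lhs => rw [← (Submodule.prodEquivOfIsCompl _ _ (hc _)).apply_symm_apply v,
      Submodule.coe_prodEquivOfIsCompl', map_add]
    rfl

lemma Indecomposable.forall_eq_bot_or_forall_eq_bot {A : CycRep k N o} (hA : A.Indecomposable)
    {P P' : ∀ i, Submodule k (A.M i)} (hP : A.IsSubrep P) (hP' : A.IsSubrep P')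
    (hc : ∀ i, IsCompl (P i) (P' i)) : (∀ i, P i = ⊥) ∨ (∀ i, P' i = ⊥) := by
  by_contra! h
  exact hA.2 _ _ ((A.nonzero_subrep_iff hP).2 h.1) ((A.nonzero_subrep_iff hP').2 h.2)
    (A.iso_prod_subrep hP hP' hc)

def IsEndo (g : ∀ i, Module.End k (A.M i)) : Prop :=
  (∀ i h v, g (i + 1) (A.up i h v) = A.up i h (g i v)) ∧
    (∀ i h v, g i (A.down i h v) = A.down i h (g (i + 1) v))

variable {A} {g : ∀ i, Module.End k (A.M i)}

lemma IsEndo.isSubrep_range (hg : A.IsEndo g) : A.IsSubrep fun i => LinearMap.range (g i) := by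
  constructor
  · rintro i h _ ⟨v, rfl⟩
    exact ⟨A.up i h v, hg.1 i h v⟩
  · rintro i h _ ⟨v, rfl⟩
    exact ⟨A.down i h v, hg.2 i h v⟩

lemma IsEndo.isSubrep_ker (hg : A.IsEndo g) : A.IsSubrep fun i => LinearMap.ker (g i) := by
  constructor
  · intro i h v hv
    rw [LinearMap.mem_ker] at hv ⊢
    rw [hg.1 i h v, hv, map_zero]
  · intro i h v hv
    rw [LinearMap.mem_ker] at hv ⊢
    rw [hg.2 i h v, hv, map_zero]

lemma Indecomposable.eq_zero_or_eq_one_of_isIdempotentElem (hA : A.Indecomposable)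
    (hg : A.IsEndo g) (hidem : IsIdempotentElem g) : g = 0 ∨ g = 1 := by
  have hi (i : ZMod N) : IsIdempotentElem (g i) := congrFun hidem i
  refine (hA.forall_eq_bot_or_forall_eq_bot hg.isSubrep_range hg.isSubrep_ker
    fun i => LinearMap.IsIdempotentElem.isCompl (hi i)).imp
    (fun h => funext fun i => LinearMap.range_eq_bot.1 (h i))
    fun h => funext fun i => LinearMap.ext fun v => ?_
  exact LinearMap.ker_eq_bot.1 (h i) (LinearMap.congr_fun (hi i) v)

end CycRep

namespace SRep

variable {k : Type} [Field k] {Q : AtR}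

lemma indecomposable_of_isIdempotentElem {V : SRep k Q} (hV : V.Nonzero)
    (h : ∀ f ∈ V.endSubring, IsIdempotentElem f → f = 0 ∨ f = 1) : V.Indecomposable := by
  refine ⟨hV, fun A B ⟨θA, a, ha⟩ ⟨θB, b, hb⟩ ⟨e, he_map, he_per⟩ => ?_⟩
  let p : ∀ θ, Module.End k ((A.prod B).obj θ) := fun _ => LinearMap.prodMap LinearMap.id 0
  let f : ∀ θ, Module.End k (V.obj θ) := fun θ => (e θ).symm.conj (p θ)
  have hf (θ : ℝ) (v : V.obj θ) : e θ (f θ v) = p θ (e θ v) := by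
    simp [f, LinearEquiv.conj_apply_apply]
  have hfV : f ∈ V.endSubring := by
    refine ⟨fun {θ φ} h v => (e φ).injective ?_, fun θ v => (e θ).injective ?_⟩
    · rw [hf, he_map, he_map, hf]
      exact Prod.ext rfl (map_zero (B.map h)).symm
    · rw [hf, he_per, he_per, hf]
      exact Prod.ext rfl (map_zero (B.per θ)).symm
  have hidem : IsIdempotentElem f := funext fun θ => LinearMap.ext fun v => (e θ).injective <| by
    rw [Pi.mul_apply, Module.End.mul_apply, hf, hf]
    rfl
  rcases h f hfV hidem with h0 | h1
  · obtain ⟨v, hv⟩ := (e θA).surjective (a, 0)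
    have hA := hf θA v
    rw [h0, hv, Pi.zero_apply, LinearMap.zero_apply, map_zero] at hA
    exact ha (congrArg Prod.fst hA).symm
  · obtain ⟨v, hv⟩ := (e θB).surjective (0, b)
    have hB := hf θB v
    rw [h1, hv, Pi.one_apply, Module.End.one_apply, hv] at hB
    exact hb (congrArg Prod.snd hB)

variable {C : CircPartition Q} {o : ZMod C.N → Bool} {A : CycRep k C.N o} {U : SRep k Q}

/-- `PushdownOf C o A U` unpacked, for a fixed family of identifications `e`. -/
structure IsPushdownEquiv (C : CircPartition Q) (o : ZMod C.N → Bool) (A : CycRep k C.N o)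
    (e : ∀ θ, U.obj θ ≃ₗ[k] A.M (C.partZ θ)) : Prop where
  map_of_partIdx_eq : ∀ {θ φ : ℝ} (h : Q.covRel θ φ) (hp : C.partIdx θ = C.partIdx φ)
    (v : U.obj θ), e φ (U.map h v) = A.castM (C.partZ_congr hp) (e θ v)
  map_of_partIdx_succ : ∀ {θ φ : ℝ} (h : Q.covRel θ φ) (hp : C.partIdx φ = C.partIdx θ + 1)
    (ht : o (C.partZ θ) = true) (v : U.obj θ),
    e φ (U.map h v) = A.castM (C.partZ_succ hp) (A.up (C.partZ θ) ht (e θ v))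
  map_of_partIdx_pred : ∀ {θ φ : ℝ} (h : Q.covRel θ φ) (hp : C.partIdx θ = C.partIdx φ + 1)
    (hf : o (C.partZ φ) = false) (v : U.obj θ),
    e φ (U.map h v) = A.down (C.partZ φ) hf (A.castM (C.partZ_pred hp) (e θ v))
  per : ∀ (θ : ℝ) (v : U.obj (θ + 2 * Real.pi)),
    e θ (U.per θ v) = A.castM (C.partZ_shift θ) (e (θ + 2 * Real.pi) v)

lemma PushdownOf.exists_isPushdownEquiv (hU : PushdownOf C o A U) :
    ∃ e : ∀ θ, U.obj θ ≃ₗ[k] A.M (C.partZ θ), IsPushdownEquiv C o A e :=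
  let ⟨e, h₁, h₂, h₃, h₄⟩ := hU
  ⟨e, h₁, h₂, h₃, h₄⟩

lemma nonzero_of_equiv (e : ∀ θ, U.obj θ ≃ₗ[k] A.M (C.partZ θ)) (hA : A.Nonzero) :
    U.Nonzero := by
  obtain ⟨i, w, hw⟩ := hA
  obtain ⟨θ, rfl⟩ := C.partZ_surjective i
  exact ⟨θ, (e θ).symm w, (LinearEquiv.map_ne_zero_iff _).2 hw⟩

/-- Recording the vertex makes the values at two points comparable: they are equal iff the two
endomorphisms agree after transport along `castM`. -/
def transfer (e : ∀ θ, U.obj θ ≃ₗ[k] A.M (C.partZ θ)) (f : ∀ θ, Module.End k (U.obj θ))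
    (θ : ℝ) : Σ i, Module.End k (A.M i) :=
  ⟨C.partZ θ, (e θ).conj (f θ)⟩

section Descent

variable {e : ∀ θ, U.obj θ ≃ₗ[k] A.M (C.partZ θ)} {f : ∀ θ, Module.End k (U.obj θ)}

lemma transfer_eq_of_intertwining {θ φ : ℝ} (T : U.obj θ →ₗ[k] U.obj φ)
    (h : C.partZ θ = C.partZ φ) (hT : ∀ v, e φ (T v) = A.castM h (e θ v))
    (hfT : ∀ v, f φ (T v) = T (f θ v)) : transfer e f θ = transfer e f φ := by
  refine A.sigma_mk_eq_of_castM h _ _ fun w => ?_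
  obtain ⟨v, rfl⟩ := (e θ).surjective w
  simp only [LinearEquiv.conj_apply_apply, LinearEquiv.symm_apply_apply]
  rw [← hT v, LinearEquiv.symm_apply_apply, hfT, hT]

variable (he : IsPushdownEquiv C o A e) (hf : IsHomFam U U f)
include he hf

lemma transfer_eq_of_covRel {θ φ : ℝ} (h : Q.covRel θ φ) (hp : C.partIdx θ = C.partIdx φ) :
    transfer e f θ = transfer e f φ :=
  transfer_eq_of_intertwining (U.map h) _ (he.map_of_partIdx_eq h hp) (hf.1 h)

lemma transfer_periodic : Function.Periodic (transfer e f) (2 * Real.pi) := fun θ =>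
  transfer_eq_of_intertwining (U.per θ).toLinearMap (C.partZ_shift θ) (he.per θ) (hf.2 θ)

lemma transfer_eq_of_partIdx_eq {θ φ : ℝ} (hp : C.partIdx θ = C.partIdx φ) :
    transfer e f θ = transfer e f φ := by
  refine AtR.eq_of_forall_arc (Q := Q) (C.ordconn (C.partIdx φ))
    (fun n x hx y hy hnx hxy hyn => ?_) (hp ▸ C.mem_partIdx θ) (C.mem_partIdx φ)
  have hxy' : C.partIdx x = C.partIdx y := (C.partIdx_eq hx).trans (C.partIdx_eq hy).symm
  rcases AtR.covRel_or_covRel ⟨hnx, hxy.trans hyn⟩ ⟨hnx.trans hxy, hyn⟩ hxy with hc | hc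
  · exact transfer_eq_of_covRel he hf hc hxy'
  · exact (transfer_eq_of_covRel he hf hc hxy'.symm).symm

lemma transfer_eq_of_partZ_eq {θ φ : ℝ} (h : C.partZ θ = C.partZ φ) :
    transfer e f θ = transfer e f φ := by
  obtain ⟨t, ht⟩ := C.exists_partIdx_add_int_mul_eq h
  rw [← (transfer_periodic he hf).int_mul t θ]
  exact transfer_eq_of_partIdx_eq he hf ht

lemma IsPushdownEquiv.exists_descent :
    ∃ g : ∀ i, Module.End k (A.M i), ∀ θ v, g (C.partZ θ) (e θ v) = e θ (f θ v) := by
  obtain ⟨g, hg⟩ := C.partZ_surjective.exists_eq_comp_of_sigma_eq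
    (β := fun i => Module.End k (A.M i)) (fun θ => (e θ).conj (f θ))
    fun θ φ h => transfer_eq_of_partZ_eq he hf h
  exact ⟨g, fun θ v => by rw [← hg, LinearEquiv.conj_apply_apply, LinearEquiv.symm_apply_apply]⟩

end Descent

section Descended

variable {e : ∀ θ, U.obj θ ≃ₗ[k] A.M (C.partZ θ)} {f : ∀ θ, Module.End k (U.obj θ)}
  {g : ∀ i, Module.End k (A.M i)} (hg : ∀ θ v, g (C.partZ θ) (e θ v) = e θ (f θ v))
include hg

lemma IsPushdownEquiv.isEndo_of_descent (he : IsPushdownEquiv C o A e) (hf : IsHomFam U U f)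
    (hup : ∀ j : ℤ, o j = true → C.dirUp j)
    (hdown : ∀ j : ℤ, o j = false → C.dirDown j) : A.IsEndo g := by
  constructor
  · intro i hi w
    obtain ⟨j, hj⟩ := ZMod.intCast_surjective i
    obtain ⟨x, hx, y, hy, hxy⟩ := hup j (hj ▸ hi)
    have hpx : C.partIdx x = j := C.partIdx_eq hx
    have hxi : C.partZ x = i := by rw [CircPartition.partZ, hpx, hj]
    subst hxi
    have hp : C.partIdx y = C.partIdx x + 1 := by rw [C.partIdx_eq hy, hpx]
    obtain ⟨v, rfl⟩ := (e x).surjective w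
    apply (A.castM (C.partZ_succ hp)).injective
    rw [← A.apply_castM, ← he.map_of_partIdx_succ hxy hp hi, hg, hf.1,
      he.map_of_partIdx_succ hxy hp hi, hg]
  · intro i hi w
    obtain ⟨j, hj⟩ := ZMod.intCast_surjective i
    obtain ⟨x, hx, y, hy, hxy⟩ := hdown j (hj ▸ hi)
    have hpy : C.partIdx y = j := C.partIdx_eq hy
    have hyi : C.partZ y = i := by rw [CircPartition.partZ, hpy, hj]
    subst hyi
    have hp : C.partIdx x = C.partIdx y + 1 := by rw [C.partIdx_eq hx, hpy]
    obtain ⟨v, rfl⟩ := ((e x).trans (A.castM (C.partZ_pred hp))).surjective w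
    rw [LinearEquiv.trans_apply, ← he.map_of_partIdx_pred hxy hp hi, hg, hf.1,
      he.map_of_partIdx_pred hxy hp hi, A.apply_castM, hg]

lemma isIdempotentElem_of_descent (hidem : IsIdempotentElem f) : IsIdempotentElem g := by
  refine funext fun i => LinearMap.ext fun w => ?_
  obtain ⟨θ, rfl⟩ := C.partZ_surjective i
  obtain ⟨v, rfl⟩ := (e θ).surjective w
  rw [Pi.mul_apply, Module.End.mul_apply, hg, hg]
  exact congrArg (e θ) (LinearMap.congr_fun (congrFun hidem θ) v)

lemma eq_zero_or_eq_one_of_descent (h : g = 0 ∨ g = 1) : f = 0 ∨ f = 1 := by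
  refine h.imp (fun h0 => ?_) fun h1 => ?_ <;>
    refine funext fun θ => LinearMap.ext fun v => (e θ).injective ?_ <;>
    rw [← hg]
  · rw [h0]; simp
  · rw [h1]; rfl

end Descended

end SRep

theorem pushdown_indecomposable_general {k : Type} [Field k] {Q : AtR} (C : CircPartition Q)
    (o : ZMod C.N → Bool)
    (ho : ∀ j : ℤ, ((o (j : ZMod C.N) = true) ↔ C.dirUp j) ∧
      ((o (j : ZMod C.N) = false) ↔ C.dirDown j))
    (M : CycRep k C.N o)
    (hM : CycRep.Indecomposable M)
    (U : SRep k Q) (hU : SRep.PushdownOf C o M U) : SRep.Indecomposable U := by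
  obtain ⟨e, he⟩ := hU.exists_isPushdownEquiv
  refine SRep.indecomposable_of_isIdempotentElem (SRep.nonzero_of_equiv e hM.1)
    fun f hf hidem => ?_
  obtain ⟨g, hg⟩ := he.exists_descent hf
  have hgEndo : M.IsEndo g :=
    he.isEndo_of_descent hg hf (fun j => (ho j).1.mp) (fun j => (ho j).2.mp)
  exact SRep.eq_zero_or_eq_one_of_descent hg
    (hM.eq_zero_or_eq_one_of_isIdempotentElem hgEndo (SRep.isIdempotentElem_of_descent hg hidem))

/-- If the auxiliary quiver of the partition `C` is the `Ã_{N-1}` quiver with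
orientation `o` and `M` is an indecomposable finite-dimensional representation of
it, then its push down is an indecomposable representation of the continuous
quiver. -/
theorem pushdown_indecomposable {k : Type} [Field k] {Q : AtR} (C : CircPartition Q)
    (o : ZMod C.N → Bool)
    (ho : ∀ j : ℤ, ((o (j : ZMod C.N) = true) ↔ C.dirUp j) ∧
      ((o (j : ZMod C.N) = false) ↔ C.dirDown j))
    (M : CycRep k C.N o) (hfd : ∀ i, FiniteDimensional k (M.M i))
    (hM : CycRep.Indecomposable M)
    (U : SRep k Q) (hU : SRep.PushdownOf C o M U) : SRep.Indecomposable U :=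
  pushdown_indecomposable_general C o ho M hM U hU
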